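/- arXiv:1707.03578 — 5 statements merged into one kernel-verified Lean document; each statement's English description precedes it below -/
import Mathlib

section
/- Let G be a locally compact second countable group. If a sequence of invariant random subgroups μ_n of G is weakly uniformly discrete and converges weak-* to δ_{{e}}, then the sequence is weakly trivial: for every compact Q ⊆ G, lim_{n→∞} p_{μ_n}(Q \ {e}) = 1. -/
open TopologicalSpace Filter Set MeasureTheory

def chabautySetTopology (Y : Type*) [TopologicalSpace Y] : TopologicalSpace (Set Y) :=
  TopologicalSpace.generateFrom
    ({S | ∃ K : Set Y, IsCompact K ∧ S = {F : Set Y | F ∩ K = ∅}} ∪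
     {S | ∃ U : Set Y, IsOpen U ∧ S = {F : Set Y | (F ∩ U).Nonempty}})

def ChabautySub (G : Type*) [Group G] [TopologicalSpace G] :=
  {H : Subgroup G // IsClosed (H : Set G)}

instance (G : Type*) [Group G] [TopologicalSpace G] : TopologicalSpace (ChabautySub G) :=
  TopologicalSpace.induced (fun H : ChabautySub G => (H.1 : Set G)) (chabautySetTopology G)

noncomputable instance (G : Type*) [Group G] [TopologicalSpace G] :
    MeasurableSpace (ChabautySub G) := borel _

def conjClosed (G : Type*) [Group G] [TopologicalSpace G] [IsTopologicalGroup G]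
    (g : G) (H : ChabautySub G) : ChabautySub G :=
  ⟨Subgroup.map (MulAut.conj g).toMonoidHom H.1, by
    have h : ((Subgroup.map (MulAut.conj g).toMonoidHom H.1 : Subgroup G) : Set G)
        = ((Homeomorph.mulLeft g).trans (Homeomorph.mulRight g⁻¹)) '' (H.1 : Set G) := by
      rw [Subgroup.coe_map]
      exact Set.image_congr fun x _ => by simp [mul_assoc]
    rw [h]
    exact ((Homeomorph.mulLeft g).trans (Homeomorph.mulRight g⁻¹)).isClosedMap _ H.2⟩

/-- The trivial subgroup `{e}` as a point of the Chabauty space. -/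
def trivialSub (G : Type*) [Group G] [TopologicalSpace G] [T1Space G] : ChabautySub G :=
  ⟨⊥, by rw [Subgroup.coe_bot]; exact isClosed_singleton⟩


section Aux

variable {G : Type*} [Group G] [TopologicalSpace G]

instance : BorelSpace (ChabautySub G) := ⟨rfl⟩

lemma isOpen_chabautyAvoid {K : Set G} (hK : IsCompact K) :
    IsOpen {H : ChabautySub G | (H.1 : Set G) ∩ K = ∅} :=
  @isOpen_induced (ChabautySub G) (Set G) (chabautySetTopology G) (fun H : ChabautySub G => (H.1 : Set G)) _
    (isOpen_generateFrom_of_mem (Or.inl ⟨K, hK, rfl⟩))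

lemma isOpen_chabautyMeet {U : Set G} (hU : IsOpen U) :
    IsOpen {H : ChabautySub G | ((H.1 : Set G) ∩ U).Nonempty} :=
  @isOpen_induced (ChabautySub G) (Set G) (chabautySetTopology G) (fun H : ChabautySub G => (H.1 : Set G)) _
    (isOpen_generateFrom_of_mem (Or.inr ⟨U, hU, rfl⟩))

lemma continuous_supFun {φ : G → ℝ} (hφ : Continuous φ) (hcs : HasCompactSupport φ)
    (h0 : ∀ x, 0 ≤ φ x) (h1 : ∀ x, φ x ≤ 1) :
    Continuous (fun H : ChabautySub G => sSup (φ '' (H.1 : Set G))) := by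
  set F : ChabautySub G → ℝ := fun H => sSup (φ '' (H.1 : Set G)) with hF
  have hne : ∀ H : ChabautySub G, (φ '' (H.1 : Set G)).Nonempty :=
    fun H => ⟨φ 1, mem_image_of_mem _ (Subgroup.one_mem _)⟩
  have hbdd : ∀ H : ChabautySub G, BddAbove (φ '' (H.1 : Set G)) :=
    fun H => ⟨1, by rintro y ⟨x, -, rfl⟩; exact h1 x⟩
  have hFnonneg : ∀ H, 0 ≤ F H := fun H =>
    le_trans (h0 1) (le_csSup (hbdd H) (mem_image_of_mem _ (Subgroup.one_mem _)))
  rw [continuous_def]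
  intro s hs
  rw [isOpen_iff_generate_intervals] at hs
  induction hs with
  | basic u hu =>
      obtain ⟨a, rfl | rfl⟩ := hu
      · have : F ⁻¹' Ioi a = {H : ChabautySub G | ((H.1 : Set G) ∩ {x | a < φ x}).Nonempty} := by
          ext H
          simp only [mem_preimage, mem_Ioi, mem_setOf_eq]
          rw [lt_csSup_iff (hbdd H) (hne H)]
          constructor
          · rintro ⟨b, ⟨x, hx, rfl⟩, hb⟩; exact ⟨x, hx, hb⟩
          · rintro ⟨x, hx, hb⟩; exact ⟨φ x, mem_image_of_mem _ hx, hb⟩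
        rw [this]
        exact isOpen_chabautyMeet (isOpen_lt continuous_const hφ)
      · have : F ⁻¹' Iio a =
            ⋃ b ∈ Ioo (0:ℝ) a, {H : ChabautySub G | (H.1 : Set G) ∩ {x | b ≤ φ x} = ∅} := by
          ext H
          simp only [mem_preimage, mem_Iio, mem_iUnion, mem_setOf_eq, mem_Ioo]
          constructor
          · intro hFa
            refine ⟨(F H + a) / 2, ⟨by linarith [hFnonneg H], by linarith⟩, ?_⟩
            rw [eq_empty_iff_forall_notMem]
            rintro x ⟨hxH, hxb⟩
            have : φ x ≤ F H := le_csSup (hbdd H) (mem_image_of_mem _ hxH)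
            simp only [mem_setOf_eq] at hxb
            linarith
          · rintro ⟨b, ⟨hb0, hba⟩, hemp⟩
            have : F H ≤ b := by
              apply csSup_le (hne H)
              rintro y ⟨x, hx, rfl⟩
              by_contra hcon
              push_neg at hcon
              exact (eq_empty_iff_forall_notMem.1 hemp x) ⟨hx, le_of_lt hcon⟩
            linarith
        rw [this]
        refine isOpen_biUnion fun b hb => isOpen_chabautyAvoid ?_
        have hclosed : IsClosed {x : G | b ≤ φ x} := isClosed_le continuous_const hφ
        refine hcs.of_isClosed_subset hclosed fun x hx => ?_
        refine subset_tsupport φ fun hsupp => ?_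
        have hb0 : b ≤ (0:ℝ) := by rw [← hsupp]; exact hx
        linarith [hb.1]
  | univ => exact isOpen_univ
  | inter _ _ _ _ h1 h2 => exact IsOpen.inter h1 h2
  | sUnion S _ hS => rw [preimage_sUnion]; exact isOpen_biUnion hS

end Aux

section Avoid

variable {G : Type*} [Group G] [TopologicalSpace G] [IsTopologicalGroup G] [T2Space G]
  [LocallyCompactSpace G]

lemma eventually_avoid
    (μ : ℕ → MeasureTheory.Measure (ChabautySub G))
    (hprob : ∀ n, MeasureTheory.IsProbabilityMeasure (μ n))
    (hweak : ∀ f : ChabautySub G → ℝ, Continuous f →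
      Tendsto (fun n => ∫ H, f H ∂(μ n)) atTop (nhds (f (trivialSub G))))
    {K : Set G} (hK : IsCompact K) (h1K : (1 : G) ∉ K) {δ : ℝ} (hδ : 0 < δ) :
    ∀ᶠ n in atTop, ENNReal.ofReal (1 - δ) ≤
      μ n {H : ChabautySub G | (H.1 : Set G) ∩ K = ∅} := by
  obtain ⟨φ, hφ1, hφ0, hφcs, hφmem⟩ :=
    exists_continuous_one_zero_of_isCompact hK (isClosed_singleton (x := (1:G)))
      (disjoint_singleton_right.mpr h1K)
  set F : ChabautySub G → ℝ := fun H => sSup (⇑φ '' (H.1 : Set G)) with hFdef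
  have hbdd : ∀ H : ChabautySub G, BddAbove (⇑φ '' (H.1 : Set G)) :=
    fun H => ⟨1, by rintro y ⟨x, -, rfl⟩; exact (hφmem x).2⟩
  have hne : ∀ H : ChabautySub G, (⇑φ '' (H.1 : Set G)).Nonempty :=
    fun H => ⟨φ 1, mem_image_of_mem _ (Subgroup.one_mem _)⟩
  have hF0 : ∀ H, 0 ≤ F H := fun H =>
    le_trans (hφmem 1).1 (le_csSup (hbdd H) (mem_image_of_mem _ (Subgroup.one_mem _)))
  have hF1 : ∀ H, F H ≤ 1 := fun H => csSup_le (hne H) (by rintro y ⟨x, -, rfl⟩; exact (hφmem x).2)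
  set f : ChabautySub G → ℝ := fun H => 1 - F H with hfdef
  have hFc : Continuous F :=
    continuous_supFun φ.continuous hφcs (fun x => (hφmem x).1) (fun x => (hφmem x).2)
  have hfc : Continuous f := continuous_const.sub hFc
  have hftriv : f (trivialSub G) = 1 := by
    have : F (trivialSub G) = 0 := by
      show sSup (⇑φ '' ((⊥ : Subgroup G) : Set G)) = 0
      rw [Subgroup.coe_bot, image_singleton, csSup_singleton]
      exact hφ0 rfl
    simp [hfdef, this]
  set 𝒪 : Set (ChabautySub G) := {H : ChabautySub G | (H.1 : Set G) ∩ K = ∅} with h𝒪def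
  have h𝒪open : IsOpen 𝒪 := isOpen_chabautyAvoid hK
  have key : ∀ n, ∫ H, f H ∂(μ n) ≤ (μ n 𝒪).toReal := by
    intro n
    haveI := hprob n
    have hfint : Integrable f (μ n) := by
      refine (integrable_const (1:ℝ)).mono' (hfc.measurable.aestronglyMeasurable)
        (ae_of_all _ fun H => ?_)
      rw [Real.norm_eq_abs, abs_le]
      constructor
      · simp only [hfdef]; linarith [hF1 H]
      · simp only [hfdef, norm_one]; linarith [hF0 H]
    have hindint : Integrable (𝒪.indicator fun _ => (1:ℝ)) (μ n) :=
      (integrable_const (1:ℝ)).indicator h𝒪open.measurableSet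
    have hle : f ≤ 𝒪.indicator fun _ => (1:ℝ) := by
      intro H
      by_cases hH : H ∈ 𝒪
      · rw [indicator_of_mem hH]
        simp only [hfdef]; linarith [hF0 H]
      · rw [indicator_of_notMem hH]
        have : ((H.1 : Set G) ∩ K).Nonempty := nonempty_iff_ne_empty.2 hH
        obtain ⟨x, hxH, hxK⟩ := this
        have : (1:ℝ) ≤ F H := by
          have := le_csSup (hbdd H) (mem_image_of_mem ⇑φ hxH)
          rwa [hφ1 hxK] at this
        simp only [hfdef]; linarith
    calc ∫ H, f H ∂(μ n) ≤ ∫ H, 𝒪.indicator (fun _ => (1:ℝ)) H ∂(μ n) :=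
          integral_mono hfint hindint hle
      _ = (μ n 𝒪).toReal := by
          rw [integral_indicator h𝒪open.measurableSet]
          simp [Measure.real]
  have htend : Tendsto (fun n => ∫ H, f H ∂(μ n)) atTop (nhds 1) := by
    have := hweak f hfc
    rwa [hftriv] at this
  have : ∀ᶠ n in atTop, 1 - δ < ∫ H, f H ∂(μ n) :=
    htend.eventually (eventually_gt_nhds (by linarith))
  filter_upwards [this] with n hn
  exact ENNReal.ofReal_le_of_le_toReal (le_trans hn.le (key n))

end Avoid

/-- Let `G` be a locally compact second countable group.  If a sequence
`μ n` of invariant random subgroups of `G` is weakly uniformly discrete (for every `ε > 0`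
there is an identity neighborhood `U` with `μ n {H | H ∩ (U \ {e}) = ∅} > 1 - ε` for all
`n`) and converges weak-* to the Dirac mass at the trivial subgroup, then the sequence is
weakly trivial: for every compact `Q ⊆ G`,
`μ n {H | H ∩ (Q \ {e}) = ∅} → 1`. -/
theorem weakStar_and_WUD_implies_weaklyTrivial
    (G : Type*) [Group G] [TopologicalSpace G] [IsTopologicalGroup G] [T2Space G]
    [LocallyCompactSpace G] [SecondCountableTopology G]
    (μ : ℕ → MeasureTheory.Measure (ChabautySub G))
    (hprob : ∀ n, MeasureTheory.IsProbabilityMeasure (μ n))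
    (hinv : ∀ n (g : G), (μ n).map (conjClosed G g) = μ n)
    (hwud : ∀ ε : ENNReal, 0 < ε → ∃ U ∈ nhds (1 : G), ∀ n,
      1 - ε < μ n {H : ChabautySub G | (H.1 : Set G) ∩ (U \ {1}) = ∅})
    (hweak : ∀ f : ChabautySub G → ℝ, Continuous f →
      Tendsto (fun n => ∫ H, f H ∂(μ n)) atTop (nhds (f (trivialSub G)))) :
    ∀ Q : Set G, IsCompact Q →
      Tendsto (fun n => μ n {H : ChabautySub G | (H.1 : Set G) ∩ (Q \ {1}) = ∅})
        atTop (nhds 1) := by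
  intro Q hQ
  rw [ENNReal.tendsto_nhds ENNReal.one_ne_top]
  intro ε hε
  set ε' : ENNReal := min ε 1 with hε'def
  have hε'pos : 0 < ε' := lt_min hε zero_lt_one
  have hε'le1 : ε' ≤ 1 := min_le_right _ _
  have hε'top : ε' ≠ ⊤ := ne_top_of_le_ne_top ENNReal.one_ne_top hε'le1
  have hhalfpos : 0 < ε' / 2 := ENNReal.div_pos (ne_of_gt hε'pos) (by norm_num)
  have hhalftop : ε' / 2 ≠ ⊤ := by
    exact ne_top_of_le_ne_top hε'top (ENNReal.half_le_self)
  obtain ⟨U, hU, hB⟩ := hwud (ε' / 2) hhalfpos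
  set V : Set G := interior U with hVdef
  have hV1 : (1 : G) ∈ V := mem_interior_iff_mem_nhds.2 hU
  set K : Set G := Q \ V with hKdef
  have hKcomp : IsCompact K := hQ.diff isOpen_interior
  have h1K : (1 : G) ∉ K := fun h => h.2 hV1
  -- choose real δ
  set δ : ℝ := (ε' / 2).toReal with hδdef
  have hδpos : 0 < δ := ENNReal.toReal_pos (ne_of_gt hhalfpos) hhalftop
  have hofReal : ENNReal.ofReal (1 - δ) = 1 - ε' / 2 := by
    rw [ENNReal.ofReal_sub _ ENNReal.toReal_nonneg, ENNReal.ofReal_one,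
      ENNReal.ofReal_toReal hhalftop]
  have hev := eventually_avoid μ hprob hweak hKcomp h1K hδpos
  set 𝒪 : Set (ChabautySub G) := {H : ChabautySub G | (H.1 : Set G) ∩ K = ∅} with h𝒪def
  have h𝒪open : IsOpen 𝒪 := isOpen_chabautyAvoid hKcomp
  filter_upwards [hev] with n hn
  haveI := hprob n
  set A : Set (ChabautySub G) := {H : ChabautySub G | (H.1 : Set G) ∩ (Q \ {1}) = ∅} with hAdef
  set B : Set (ChabautySub G) := {H : ChabautySub G | (H.1 : Set G) ∩ (U \ {1}) = ∅} with hBdef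
  have hsub : B ∩ 𝒪 ⊆ A := by
    rintro H ⟨hHB, hH𝒪⟩
    rw [hAdef, mem_setOf_eq, eq_empty_iff_forall_notMem]
    rintro x ⟨hxH, hxQ, hx1⟩
    by_cases hxV : x ∈ V
    · exact (eq_empty_iff_forall_notMem.1 hHB x) ⟨hxH, interior_subset hxV, hx1⟩
    · exact (eq_empty_iff_forall_notMem.1 hH𝒪 x) ⟨hxH, hxQ, hxV⟩
  have h𝒪n : 1 - ε' / 2 ≤ μ n 𝒪 := hofReal ▸ hn
  have hcompl : μ n 𝒪ᶜ ≤ ε' / 2 := by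
    rw [measure_compl h𝒪open.measurableSet (measure_ne_top _ _), measure_univ]
    calc 1 - μ n 𝒪 ≤ 1 - (1 - ε' / 2) := tsub_le_tsub_left h𝒪n 1
      _ = ε' / 2 := ENNReal.sub_sub_cancel ENNReal.one_ne_top (le_trans ENNReal.half_le_self hε'le1)
  have hlow : 1 - ε ≤ μ n A := by
    have h1 : μ n B ≤ μ n (B ∩ 𝒪) + μ n 𝒪ᶜ := by
      refine le_trans (measure_mono ?_) (measure_union_le _ _)
      intro H hH
      by_cases h : H ∈ 𝒪
      · exact Or.inl ⟨hH, h⟩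
      · exact Or.inr h
    have h2 : μ n B - μ n 𝒪ᶜ ≤ μ n (B ∩ 𝒪) := tsub_le_iff_right.2 h1
    have h3 : (1 - ε' / 2) - ε' / 2 ≤ μ n (B ∩ 𝒪) :=
      le_trans (tsub_le_tsub (le_of_lt (hB n)) hcompl) h2
    have h4 : (1 : ENNReal) - ε' ≤ μ n (B ∩ 𝒪) := by
      rwa [tsub_tsub, ENNReal.add_halves] at h3
    calc (1 : ENNReal) - ε ≤ 1 - ε' := tsub_le_tsub_left (min_le_left _ _) 1
      _ ≤ μ n (B ∩ 𝒪) := h4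
      _ ≤ μ n A := measure_mono hsub
  exact ⟨hlow, le_trans prob_le_one le_self_add⟩
end

section
/- Let G be a locally compact second countable group acting properly and continuously by isometries on a proper pointed metric space (X, x). Then the natural map from the Chabauty space Sub(G) to the space of quotients Q(G,X), sending a closed subgroup H to the pointed metric space (H\X, Hx) with the quotient metric, is continuous with respect to the Chabauty topology and the pointed Gromov–Hausdorff topology. -/
open TopologicalSpace Filter Set MeasureTheory

/-- The quotient (pseudo)distance on `H\X`, computed on representatives in `X`. -/
noncomputable def quotDist {G : Type*} [Group G] [TopologicalSpace G] {X : Type*}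
    [MetricSpace X] [MulAction G X] (H : ChabautySub G) (x y : X) : ℝ :=
  ⨅ h : H.1, dist x ((h : G) • y)

/-- `R` is an `(ε, r)`-relation between the pointed quotient metric spaces
`(H\X, Hx₀)` and `(L\X, Lx₀)`, expressed via representatives in `X` with the quotient
distances. -/
def IsEpsRelation {G : Type*} [Group G] [TopologicalSpace G] {X : Type*}
    [MetricSpace X] [MulAction G X] (H L : ChabautySub G) (x₀ : X) (ε r : ℝ)
    (R : Set (X × X)) : Prop :=
  (x₀, x₀) ∈ R ∧
  (∀ p : X, quotDist H x₀ p ≤ r → ∃ q : X, quotDist L x₀ q ≤ r ∧ (p, q) ∈ R) ∧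
  (∀ q : X, quotDist L x₀ q ≤ r → ∃ p : X, quotDist H x₀ p ≤ r ∧ (p, q) ∈ R) ∧
  (∀ p q p' q' : X, (p, q) ∈ R → (p', q') ∈ R →
    |quotDist H p p' - quotDist L q q'| < ε)

-- auxiliary lemmas, to be inserted above the theorem
section ChabautyAux

open Metric

variable {G : Type*} [Group G] [TopologicalSpace G]
variable {X : Type*} [MetricSpace X] [MulAction G X]

private lemma iInf_comp_surj {ι : Sort*} {κ : Sort*} {σ : ι → κ} (f : κ → ℝ)
    (hσ : Function.Surjective σ) : ⨅ i, f (σ i) = ⨅ k, f k := by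
  show sInf (Set.range (f ∘ σ)) = sInf (Set.range f)
  rw [hσ.range_comp]

lemma quotDist_bddBelow (H : ChabautySub G) (x y : X) :
    BddBelow (Set.range fun h : H.1 => dist x ((h : G) • y)) :=
  ⟨0, by rintro d ⟨i, rfl⟩; exact dist_nonneg⟩

lemma quotDist_le (H : ChabautySub G) (x y : X) {h : G} (hh : h ∈ H.1) :
    quotDist H x y ≤ dist x (h • y) :=
  ciInf_le (quotDist_bddBelow H x y) (⟨h, hh⟩ : H.1)

lemma quotDist_le_dist (H : ChabautySub G) (x y : X) : quotDist H x y ≤ dist x y := by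
  simpa using quotDist_le H x y (one_mem H.1)

lemma quotDist_smul_left (H : ChabautySub G)
    (hisom : ∀ g : G, Isometry (fun x : X => g • x))
    {g : G} (hg : g ∈ H.1) (a b : X) :
    quotDist H (g • a) b = quotDist H a b := by
  have key : ∀ h : H.1, dist (g • a) ((h : G) • b)
      = dist a (((⟨g⁻¹ * (h : G), mul_mem (inv_mem hg) h.2⟩ : H.1) : G) • b) := by
    intro h
    have h1 : ((h : G)) • b = g • ((g⁻¹ * (h : G)) • b) := by
      rw [smul_smul, mul_inv_cancel_left]
    rw [h1]
    exact (hisom g).dist_eq a ((g⁻¹ * (h : G)) • b)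
  unfold quotDist
  simp only [key]
  exact iInf_comp_surj (σ := fun h : H.1 => (⟨g⁻¹ * (h : G), mul_mem (inv_mem hg) h.2⟩ : H.1))
    (fun k : H.1 => dist a ((k : G) • b))
    (fun k => ⟨⟨g * (k : G), mul_mem hg k.2⟩, Subtype.ext (inv_mul_cancel_left g (k : G))⟩)

lemma quotDist_smul_right (H : ChabautySub G)
    {g : G} (hg : g ∈ H.1) (a b : X) :
    quotDist H a (g • b) = quotDist H a b := by
  have key : ∀ h : H.1, dist a ((h : G) • (g • b))
      = dist a (((⟨(h : G) * g, mul_mem h.2 hg⟩ : H.1) : G) • b) := by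
    intro h; rw [smul_smul]
  unfold quotDist
  simp only [key]
  exact iInf_comp_surj (σ := fun h : H.1 => (⟨(h : G) * g, mul_mem h.2 hg⟩ : H.1))
    (fun k : H.1 => dist a ((k : G) • b))
    (fun k => ⟨⟨(k : G) * g⁻¹, mul_mem k.2 (inv_mem hg)⟩,
      Subtype.ext (inv_mul_cancel_right (k : G) g)⟩)

lemma quotDist_attained [ProperSpace X] [ContinuousSMul G X]
    (hproper : IsProperMap (fun p : G × X => (p.1 • p.2, p.2)))
    (M : ChabautySub G) (a b : X) :
    ∃ m ∈ M.1, dist a (m • b) = quotDist M a b := by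
  have hcont : Continuous (fun g : G => dist a (g • b)) :=
    continuous_const.dist (continuous_id.smul continuous_const)
  set S : Set G := {g : G | g ∈ M.1 ∧ dist a (g • b) ≤ dist a b} with hS
  have hT : IsCompact (Prod.fst '' ((fun p : G × X => (p.1 • p.2, p.2)) ⁻¹'
      (closedBall a (dist a b) ×ˢ ({b} : Set X)))) :=
    ((hproper.isCompact_preimage
      ((isCompact_closedBall a (dist a b)).prod isCompact_singleton))).image continuous_fst
  have hScl : IsClosed S := by
    have : S = (M.1 : Set G) ∩ (fun g : G => dist a (g • b)) ⁻¹' Set.Iic (dist a b) := rfl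
    rw [this]
    exact M.2.inter (isClosed_Iic.preimage hcont)
  have hSsub : S ⊆ Prod.fst '' ((fun p : G × X => (p.1 • p.2, p.2)) ⁻¹'
      (closedBall a (dist a b) ×ˢ ({b} : Set X))) := by
    rintro g ⟨-, hg2⟩
    exact ⟨(g, b), ⟨by simpa [dist_comm] using hg2, rfl⟩, rfl⟩
  have hScomp : IsCompact S := hT.of_isClosed_subset hScl hSsub
  have hSne : S.Nonempty := ⟨1, one_mem M.1, by simp⟩
  obtain ⟨m, hmS, hmin⟩ := hScomp.exists_isMinOn hSne hcont.continuousOn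
  refine ⟨m, hmS.1, le_antisymm ?_ (quotDist_le M a b hmS.1)⟩
  refine le_ciInf fun g => ?_
  by_cases hg : dist a ((g : G) • b) ≤ dist a b
  · exact isMinOn_iff.1 hmin _ ⟨g.2, hg⟩
  · calc dist a (m • b) ≤ dist a ((1 : G) • b) := isMinOn_iff.1 hmin _ ⟨one_mem M.1, by simp⟩
      _ ≤ dist a ((g : G) • b) := by simpa using (not_le.1 hg).le

lemma isOpen_chabauty_hit {U : Set G} (hU : IsOpen U) :
    IsOpen {L : ChabautySub G | ((L.1 : Set G) ∩ U).Nonempty} := by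
  refine (@isOpen_induced_iff _ _ (chabautySetTopology G) _
    (fun H : ChabautySub G => (H.1 : Set G))).mpr
    ⟨{F : Set G | (F ∩ U).Nonempty}, ?_, rfl⟩
  exact TopologicalSpace.GenerateOpen.basic _ (Or.inr ⟨U, hU, rfl⟩)

lemma isOpen_chabauty_miss {K : Set G} (hK : IsCompact K) :
    IsOpen {L : ChabautySub G | (L.1 : Set G) ∩ K = ∅} := by
  refine (@isOpen_induced_iff _ _ (chabautySetTopology G) _
    (fun H : ChabautySub G => (H.1 : Set G))).mpr
    ⟨{F : Set G | F ∩ K = ∅}, ?_, rfl⟩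
  exact TopologicalSpace.GenerateOpen.basic _ (Or.inl ⟨K, hK, rfl⟩)

end ChabautyAux

/-- Let `G` be a locally compact second countable group acting properly
and continuously by isometries on a proper pointed metric space `(X, x₀)`.  Then the map
from the Chabauty space of `G` to the space of quotients, `H ↦ (H\X, Hx₀)`, is continuous
with respect to the Chabauty topology and the pointed Gromov–Hausdorff topology: for every
closed subgroup `H` and all `ε, r > 0`, all subgroups `L` in some Chabauty neighborhood
of `H` admit an `(ε, r)`-relation between the quotients `H\X` and `L\X`. -/
theorem chabauty_to_quotients_continuous
    (G : Type*) [Group G] [TopologicalSpace G] [IsTopologicalGroup G]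
    [LocallyCompactSpace G] [SecondCountableTopology G]
    (X : Type*) [MetricSpace X] [ProperSpace X] [MulAction G X]
    [ContinuousSMul G X]
    (hisom : ∀ g : G, Isometry (fun x : X => g • x))
    (hproper : IsProperMap (fun p : G × X => (p.1 • p.2, p.2)))
    (x₀ : X) :
    ∀ H : ChabautySub G, ∀ ε > (0 : ℝ), ∀ r > (0 : ℝ),
      ∃ Ω : Set (ChabautySub G), IsOpen Ω ∧ H ∈ Ω ∧
        ∀ L ∈ Ω, ∃ R : Set (X × X), IsEpsRelation H L x₀ ε r R := by
  intro H ε hε r hr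
  set ε' : ℝ := ε / 4 with hε'def
  have hε' : 0 < ε' := by positivity
  set B : Set X := Metric.closedBall x₀ r with hBdef
  have hBcomp : IsCompact B := isCompact_closedBall x₀ r
  have hBiff : ∀ x : X, x ∈ B ↔ dist x₀ x ≤ r := fun x => by
    rw [hBdef, Metric.mem_closedBall, dist_comm]
  -- the compact set of "relevant" group elements
  set K : Set G := Prod.fst '' ((fun p : G × X => (p.1 • p.2, p.2)) ⁻¹'
      (Metric.closedBall x₀ (3 * r) ×ˢ Metric.closedBall x₀ r)) with hKdef
  have hKcomp : IsCompact K := ((hproper.isCompact_preimage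
      ((isCompact_closedBall _ _).prod (isCompact_closedBall _ _)))).image continuous_fst
  have hKmem : ∀ (g : G), ∀ a' ∈ B, dist x₀ (g • a') ≤ 3 * r → g ∈ K := by
    intro g a' ha' hd
    exact ⟨(g, a'), ⟨by simpa [dist_comm] using hd, ha'⟩, rfl⟩
  -- small neighborhoods with uniformly small displacement over B
  have hU : ∀ h : G, ∃ U : Set G, IsOpen U ∧ h ∈ U ∧
      ∀ g ∈ U, ∀ x ∈ B, dist (g • x) (h • x) < ε' := by
    intro h
    have hcont : Continuous (fun p : G × X => dist (p.1 • p.2) (h • p.2)) :=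
      (continuous_fst.smul continuous_snd).dist (continuous_const.smul continuous_snd)
    have hopen : IsOpen {p : G × X | dist (p.1 • p.2) (h • p.2) < ε'} :=
      isOpen_lt hcont continuous_const
    have hsub : ({h} : Set G) ×ˢ B ⊆ {p : G × X | dist (p.1 • p.2) (h • p.2) < ε'} := by
      rintro ⟨g, x⟩ ⟨hg, -⟩
      rcases hg with rfl
      simpa using hε'
    obtain ⟨u, v, hu, -, hhu, hBv, huv⟩ :=
      generalized_tube_lemma isCompact_singleton hBcomp hopen hsub
    refine ⟨u, hu, hhu rfl, fun g hg x hx => ?_⟩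
    exact huv (Set.mk_mem_prod hg (hBv hx))
  choose U hUopen hUmem hUclose using hU
  -- the open set V covering H
  set V : Set G := ⋃ h ∈ (H.1 : Set G), U h with hVdef
  have hVopen : IsOpen V := isOpen_biUnion fun h _ => hUopen h
  have hHV : (H.1 : Set G) ⊆ V := fun h hh => Set.mem_biUnion hh (hUmem h)
  -- finite subcover of H ∩ K
  have hHK : IsCompact ((H.1 : Set G) ∩ K) := hKcomp.inter_left H.2
  obtain ⟨T, hT⟩ := hHK.elim_finite_subcover
    (fun h : (H.1 : Set G) => U (h : G)) (fun h => hUopen _)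
    (fun x hx => Set.mem_iUnion.2 ⟨⟨x, hx.1⟩, hUmem x⟩)
  -- the Chabauty neighborhood
  set Ω : Set (ChabautySub G) :=
    {L : ChabautySub G | (L.1 : Set G) ∩ (K \ V) = ∅} ∩
      ⋂ i ∈ T, {L : ChabautySub G | ((L.1 : Set G) ∩ U (i : G)).Nonempty} with hΩdef
  have hΩopen : IsOpen Ω := by
    refine (isOpen_chabauty_miss (hKcomp.diff hVopen)).inter ?_
    exact isOpen_biInter_finset fun i _ => isOpen_chabauty_hit (hUopen (i : G))
  have hHΩ : H ∈ Ω := by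
    constructor
    · show (H.1 : Set G) ∩ (K \ V) = ∅
      rw [Set.eq_empty_iff_forall_notMem]
      rintro g ⟨hg1, hg2⟩
      exact hg2.2 (hHV hg1)
    · exact Set.mem_biInter fun i _ => ⟨(i : G), i.2, hUmem (i : G)⟩
  refine ⟨Ω, hΩopen, hHΩ, fun L hL => ?_⟩
  obtain ⟨hLmiss, hLhit⟩ := hL
  -- the key estimate: quotients distances are 2ε'-close on B
  have key : ∀ a ∈ B, ∀ a' ∈ B, |quotDist H a a' - quotDist L a a'| < ε := by
    intro a ha a' ha'
    have haB : dist x₀ a ≤ r := (hBiff a).1 ha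
    have ha'B : dist x₀ a' ≤ r := (hBiff a').1 ha'
    have hdaa' : dist a a' ≤ 2 * r := by
      calc dist a a' ≤ dist a x₀ + dist x₀ a' := dist_triangle _ _ _
        _ ≤ r + r := add_le_add (by simpa [dist_comm] using haB) ha'B
        _ = 2 * r := by ring
    -- (1) : quotDist L ≤ quotDist H + 2ε'
    have h1 : quotDist L a a' ≤ quotDist H a a' + 2 * ε' := by
      obtain ⟨h, hh, hd⟩ := quotDist_attained hproper H a a'
      have hdle : dist a (h • a') ≤ 2 * r := by
        rw [hd]; exact (quotDist_le_dist H a a').trans hdaa'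
      have hhK : h ∈ K := by
        refine hKmem h a' ha' ?_
        calc dist x₀ (h • a') ≤ dist x₀ a + dist a (h • a') := dist_triangle _ _ _
          _ ≤ r + 2 * r := add_le_add haB hdle
          _ = 3 * r := by ring
      obtain ⟨i, hiT, hhUi⟩ : ∃ i ∈ T, h ∈ U (i : G) := by
        have := hT ⟨hh, hhK⟩
        simpa using this
      obtain ⟨l, hlL, hlUi⟩ := Set.mem_iInter₂.1 hLhit i hiT
      calc quotDist L a a' ≤ dist a (l • a') := quotDist_le L a a' hlL
        _ ≤ dist a (h • a') + dist (h • a') ((i : G) • a') + dist ((i : G) • a') (l • a') :=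
            dist_triangle4 _ _ _ _
        _ ≤ quotDist H a a' + ε' + ε' := by
            refine add_le_add (add_le_add hd.le (hUclose (i : G) h hhUi a' ha').le) ?_
            rw [dist_comm]
            exact (hUclose (i : G) l hlUi a' ha').le
        _ = quotDist H a a' + 2 * ε' := by ring
    -- (2) : quotDist H ≤ quotDist L + ε'
    have h2 : quotDist H a a' ≤ quotDist L a a' + ε' := by
      obtain ⟨l, hl, hd⟩ := quotDist_attained hproper L a a'
      have hdle : dist a (l • a') ≤ 2 * r := by
        rw [hd]; exact (quotDist_le_dist L a a').trans hdaa'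
      have hlK : l ∈ K := by
        refine hKmem l a' ha' ?_
        calc dist x₀ (l • a') ≤ dist x₀ a + dist a (l • a') := dist_triangle _ _ _
          _ ≤ r + 2 * r := add_le_add haB hdle
          _ = 3 * r := by ring
      have hlV : l ∈ V := by
        by_contra hlV
        exact (Set.eq_empty_iff_forall_notMem.1 hLmiss l) ⟨hl, hlK, hlV⟩
      obtain ⟨h, hh, hlUh⟩ : ∃ h ∈ (H.1 : Set G), l ∈ U h := by
        rw [hVdef] at hlV
        simpa using Set.mem_iUnion₂.1 hlV
      calc quotDist H a a' ≤ dist a (h • a') := quotDist_le H a a' hh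
        _ ≤ dist a (l • a') + dist (l • a') (h • a') := dist_triangle _ _ _
        _ ≤ quotDist L a a' + ε' := add_le_add hd.le (hUclose h l hlUh a' ha').le
    rw [abs_sub_lt_iff]
    constructor
    · calc quotDist H a a' - quotDist L a a' ≤ ε' := by linarith
        _ < ε := by rw [hε'def]; linarith
    · calc quotDist L a a' - quotDist H a a' ≤ 2 * ε' := by linarith
        _ < ε := by rw [hε'def]; linarith
  -- the relation
  refine ⟨{pq : X × X | ∃ h ∈ H.1, ∃ l ∈ L.1, h • pq.1 = l • pq.2 ∧ h • pq.1 ∈ B},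
    ?_, ?_, ?_, ?_⟩
  · exact ⟨1, one_mem _, 1, one_mem _, rfl, by
      simp only [one_smul]; exact Metric.mem_closedBall_self hr.le⟩
  · intro p hp
    obtain ⟨h, hh, hd⟩ := quotDist_attained hproper H x₀ p
    have hdr : dist x₀ (h • p) ≤ r := hd.trans_le hp
    refine ⟨h • p, (quotDist_le_dist L x₀ (h • p)).trans hdr, h, hh, 1, one_mem _, ?_, ?_⟩
    · simp
    · exact (hBiff _).2 hdr
  · intro q hq
    obtain ⟨l, hl, hd⟩ := quotDist_attained hproper L x₀ q
    have hdr : dist x₀ (l • q) ≤ r := hd.trans_le hq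
    refine ⟨l • q, (quotDist_le_dist H x₀ (l • q)).trans hdr, 1, one_mem _, l, hl, ?_, ?_⟩
    · simp
    · simp only [one_smul]
      exact (hBiff _).2 hdr
  · rintro p q p' q' ⟨h, hh, l, hl, heq, hmem⟩ ⟨h', hh', l', hl', heq', hmem'⟩
    have hp : p = h⁻¹ • (h • p) := (inv_smul_smul h p).symm
    have hp' : p' = h'⁻¹ • (h' • p') := (inv_smul_smul h' p').symm
    have hq : q = l⁻¹ • (h • p) := by rw [heq]; exact (inv_smul_smul l q).symm
    have hq' : q' = l'⁻¹ • (h' • p') := by rw [heq']; exact (inv_smul_smul l' q').symm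
    have eH : quotDist H p p' = quotDist H (h • p) (h' • p') := by
      conv_lhs => rw [hp, hp']
      rw [quotDist_smul_left H hisom (inv_mem hh), quotDist_smul_right H (inv_mem hh')]
    have eL : quotDist L q q' = quotDist L (h • p) (h' • p') := by
      conv_lhs => rw [hq, hq']
      rw [quotDist_smul_left L hisom (inv_mem hl), quotDist_smul_right L (inv_mem hl')]
    rw [eH, eL]
    exact key (h • p) hmem (h' • p') hmem'
end

section
/- Let H be a locally compact second countable group and O ≤ H an open subgroup such that there are only finitely many subgroups Q with O ≤ Q ≤ H. If O is an isolated point of its own Chabauty space Sub(O) (i.e., {O} is open in Sub(O)), then H is an isolated point of Sub(H). -/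
open TopologicalSpace Filter Set MeasureTheory

/-- The whole group as a point of its Chabauty space. -/
def fullSub (G : Type*) [Group G] [TopologicalSpace G] : ChabautySub G :=
  ⟨⊤, by rw [Subgroup.coe_top]; exact isClosed_univ⟩

/-- Let `H` be a locally compact second countable group and `O ≤ H` an
open subgroup with only finitely many intermediate subgroups `O ≤ Q ≤ H`.  If `O` is an
isolated point of its own Chabauty space, then `H` is an isolated point of its Chabauty
space. -/
theorem self_chabauty_isolated_of_open_subgroup
    (H : Type*) [Group H] [TopologicalSpace H] [IsTopologicalGroup H]
    [LocallyCompactSpace H] [SecondCountableTopology H]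
    (O : Subgroup H) (hO : IsOpen (O : Set H))
    (hfin : {Q : Subgroup H | O ≤ Q}.Finite)
    (hiso : IsOpen ({fullSub O} : Set (ChabautySub O))) :
    IsOpen ({fullSub H} : Set (ChabautySub H)) := by
  classical
  obtain ⟨V, hV, hVeq⟩ := hiso
  letI tO : TopologicalSpace (Set ↥O) := chabautySetTopology O
  have hbasis := TopologicalSpace.isTopologicalBasis_of_subbasis (t := tO)
    (s := ({S | ∃ K : Set ↥O, IsCompact K ∧ S = {F : Set ↥O | F ∩ K = ∅}} ∪
           {S | ∃ U : Set ↥O, IsOpen U ∧ S = {F : Set ↥O | (F ∩ U).Nonempty}})) rfl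
  have hunivV : (univ : Set ↥O) ∈ V := by
    have : fullSub O ∈ (fun P : ChabautySub O => (P.1 : Set ↥O)) ⁻¹' V := by
      rw [hVeq]; rfl
    exact this
  obtain ⟨b, ⟨f, ⟨hffin, hfsub⟩, rfl⟩, hmemb, hbV⟩ :=
    hbasis.exists_subset_of_mem_open hunivV hV
  have key : ∀ s (_ : s ∈ f), ∃ T : Set (Set H),
      T ∈ ({S | ∃ K : Set H, IsCompact K ∧ S = {F : Set H | F ∩ K = ∅}} ∪
           {S | ∃ U : Set H, IsOpen U ∧ S = {F : Set H | (F ∩ U).Nonempty}}) ∧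
      (univ : Set H) ∈ T ∧
      ∀ P : Subgroup H, (P : Set H) ∈ T →
        ((P.subgroupOf O : Subgroup ↥O) : Set ↥O) ∈ s := by
    intro s hs
    have hsuniv : (univ : Set ↥O) ∈ s := Set.mem_sInter.mp hmemb s hs
    rcases hfsub hs with ⟨K, hK, rfl⟩ | ⟨U, hU, rfl⟩
    · have hKempty : K = ∅ := by simpa using hsuniv
      refine ⟨{F : Set H | F ∩ (∅ : Set H) = ∅}, Or.inl ⟨∅, isCompact_empty, rfl⟩, by simp, ?_⟩
      intro P _
      simp [hKempty]
    · have hUne : U.Nonempty := by simpa using hsuniv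
      refine ⟨{F : Set H | (F ∩ (Subtype.val '' U)).Nonempty},
        Or.inr ⟨Subtype.val '' U, hO.isOpenMap_subtype_val U hU, rfl⟩, ?_, ?_⟩
      · obtain ⟨u, hu⟩ := hUne
        exact ⟨u.1, trivial, u, hu, rfl⟩
      · rintro P ⟨x, hxP, u, huU, rfl⟩
        exact ⟨u, by simpa [Subgroup.coe_subgroupOf] using hxP, huU⟩
  choose T hTsub hTuniv hTkey using key
  set B : Set (Subgroup H) := {Q : Subgroup H | O ≤ Q ∧ Q ≠ ⊤} with hB
  have hBfin : B.Finite := hfin.subset fun Q hQ => hQ.1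
  have hQclosed : ∀ Q ∈ B, IsClosed (Q : Set H) := fun Q hQ =>
    Q.isClosed_of_isOpen (Subgroup.isOpen_mono hQ.1 hO)
  letI tH : TopologicalSpace (Set H) := chabautySetTopology H
  set W : Set (Set H) :=
    (⋂ s : f, T s.1 s.2) ∩
    (⋂ Q : B, {F : Set H | (F ∩ ((Q : Subgroup H) : Set H)ᶜ).Nonempty}) with hW
  have hWopen : IsOpen W := by
    haveI := hffin.to_subtype
    haveI := hBfin.to_subtype
    apply IsOpen.inter
    · exact isOpen_iInter_of_finite fun s =>
        TopologicalSpace.isOpen_generateFrom_of_mem (hTsub s.1 s.2)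
    · refine isOpen_iInter_of_finite fun Q => ?_
      exact TopologicalSpace.isOpen_generateFrom_of_mem
        (Or.inr ⟨((Q : Subgroup H) : Set H)ᶜ, (hQclosed Q.1 Q.2).isOpen_compl, rfl⟩)
  refine ⟨W, hWopen, ?_⟩
  ext P
  simp only [Set.mem_preimage, Set.mem_singleton_iff]
  constructor
  · rintro ⟨h1, h2⟩
    -- P.1 restricted to O is a closed subgroup of O lying in every s ∈ f
    have hP'closed : IsClosed ((P.1.subgroupOf O : Subgroup ↥O) : Set ↥O) := by
      rw [Subgroup.coe_subgroupOf]
      exact P.2.preimage continuous_subtype_val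
    have hP'V : ((P.1.subgroupOf O : Subgroup ↥O) : Set ↥O) ∈ V := by
      apply hbV
      rw [Set.mem_sInter]
      intro s hs
      exact hTkey s hs P.1 (Set.mem_iInter.mp h1 ⟨s, hs⟩)
    have hP'top : P.1.subgroupOf O = ⊤ := by
      have : (⟨P.1.subgroupOf O, hP'closed⟩ : ChabautySub O) ∈
          (fun P : ChabautySub O => (P.1 : Set ↥O)) ⁻¹' V := hP'V
      rw [hVeq] at this
      exact congrArg Subtype.val (Set.eq_of_mem_singleton this)
    have hOP : O ≤ P.1 := Subgroup.subgroupOf_eq_top.mp hP'top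
    by_contra hne
    have hPB : P.1 ∈ B := ⟨hOP, fun h => hne (Subtype.ext (by simp [fullSub, h]))⟩
    obtain ⟨x, hx1, hx2⟩ := Set.mem_iInter.mp h2 ⟨P.1, hPB⟩
    exact hx2 hx1
  · rintro rfl
    constructor
    · exact Set.mem_iInter.mpr fun s => by
        simpa [fullSub] using hTuniv s.1 s.2
    · refine Set.mem_iInter.mpr fun Q => ?_
      obtain ⟨x, hx⟩ : ∃ x, x ∉ (Q : Subgroup H) := by
        by_contra h
        push_neg at h
        exact Q.2.2 (Subgroup.eq_top_iff' _ |>.mpr h)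
      exact ⟨x, by simp [fullSub], hx⟩
end

section
/- Let P₁,…,P_n be topologically finitely generated pro-p_i groups for primes p_1,…,p_n. Then the direct product P = P₁ × ⋯ × P_n is an isolated point of its Chabauty space Sub(P); i.e., there are finitely many open subsets U₁,…,U_m ⊆ P such that the only closed subgroup of P intersecting each U_j nontrivially is P itself. -/
open TopologicalSpace Filter Set MeasureTheory
open scoped commutatorElement

section CoatomLemma

variable {G : Type*} [Group G] [TopologicalSpace G] [IsTopologicalGroup G]

lemma exists_open_coatom [CompactSpace G] [T2Space G] [TotallyDisconnectedSpace G]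
    (H : Subgroup G) (hHc : IsClosed (H : Set G)) (hne : H ≠ ⊤) :
    ∃ M : Subgroup G, IsOpen (M : Set G) ∧ IsCoatom M ∧ H ≤ M := by
  obtain ⟨g, hg⟩ : ∃ g, g ∉ H := by
    by_contra h; push_neg at h; exact hne ((Subgroup.eq_top_iff' H).mpr h)
  have hset : IsClosed ((fun h : G => h⁻¹ * g) '' (H : Set G)) := by
    have heq : (fun h : G => h⁻¹ * g) = (Homeomorph.mulRight g) ∘ (Homeomorph.inv G) := rfl
    rw [heq, Set.image_comp]
    exact (Homeomorph.mulRight g).isClosedMap _ ((Homeomorph.inv G).isClosedMap _ hHc)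
  have h1 : (1 : G) ∉ (fun h : G => h⁻¹ * g) '' (H : Set G) := by
    rintro ⟨h, hh, e⟩
    apply hg
    have : g = h := by
      have := e.symm
      rwa [eq_comm, inv_mul_eq_one, eq_comm] at this
    rw [this]; exact hh
  obtain ⟨W, ⟨h1W, hWclopen⟩, hWsub⟩ :=
    (nhds_basis_clopen (1 : G)).mem_iff.mp (hset.isOpen_compl.mem_nhds h1)
  obtain ⟨V, hVsub⟩ :=
    IsTopologicalGroup.exist_openNormalSubgroup_sub_clopen_nhds_of_one hWclopen h1W
  have hgnot : g ∉ H ⊔ V.toSubgroup := by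
    intro hmem
    rw [← SetLike.mem_coe, Subgroup.mul_normal] at hmem
    obtain ⟨h, hh, v, hv, he⟩ := hmem
    have hv' : h⁻¹ * g ∈ (fun h : G => h⁻¹ * g) '' (H : Set G) := ⟨h, hh, rfl⟩
    have : h⁻¹ * g = v := by rw [← he, inv_mul_cancel_left]
    rw [this] at hv'
    exact hWsub (hVsub hv) hv'
  set U : Subgroup G := H ⊔ V.toSubgroup with hU
  have hVleU : V.toSubgroup ≤ U := le_sup_right
  have hUopen : IsOpen (U : Set G) := Subgroup.isOpen_mono hVleU V.isOpen
  have hUne : U ≠ ⊤ := fun h => hgnot (h ▸ Subgroup.mem_top g)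
  haveI : Finite (G ⧸ V.toSubgroup) := Subgroup.quotient_finite_of_isOpen _ V.isOpen
  set s : Set (Subgroup G) := {K | K ≠ ⊤ ∧ U ≤ K} with hs
  have hfin : s.Finite := by
    have hinj : Set.InjOn (Subgroup.map (QuotientGroup.mk' V.toSubgroup)) s := by
      intro K1 h1 K2 h2 he
      have e1 : ∀ K : Subgroup G, K ∈ s →
          Subgroup.comap (QuotientGroup.mk' V.toSubgroup)
            (Subgroup.map (QuotientGroup.mk' V.toSubgroup) K) = K := by
        intro K hK
        rw [Subgroup.comap_map_eq, QuotientGroup.ker_mk',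
          sup_eq_left.mpr (le_trans hVleU hK.2)]
      rw [← e1 K1 h1, ← e1 K2 h2, he]
    exact Set.Finite.of_finite_image (Set.toFinite _) hinj
  obtain ⟨M, hMs, hMmax⟩ := Set.Finite.exists_maximalFor id s hfin ⟨U, hUne, le_rfl⟩
  refine ⟨M, Subgroup.isOpen_mono (le_trans hVleU hMs.2) V.isOpen, ⟨hMs.1, ?_⟩,
    le_trans le_sup_left hMs.2⟩
  intro L hML
  by_contra hL
  exact (not_le_of_gt hML) (hMmax ⟨hL, le_trans hMs.2 hML.le⟩ hML.le)

end CoatomLemma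


lemma quot_aux {n : ℕ} (p : Fin n → ℕ) (hp : ∀ i, (p i).Prime)
    (P : Fin n → Type*) [∀ i, Group (P i)] [∀ i, TopologicalSpace (P i)]
    [∀ i, IsTopologicalGroup (P i)] [∀ i, CompactSpace (P i)]
    (hpro : ∀ i, ∀ U : Subgroup (P i), U.Normal → IsOpen (U : Set (P i)) →
      ∃ m : ℕ, Nat.card (P i ⧸ U) = p i ^ m)
    (V : Subgroup (∀ i, P i)) [hVn : V.Normal] (hVopen : IsOpen (V : Set (∀ i, P i))) :
    Group.IsNilpotent ((∀ i, P i) ⧸ V) ∧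
      ∀ r : ℕ, r.Prime → r ∣ Nat.card ((∀ i, P i) ⧸ V) → ∃ i, r = p i := by
  classical
  set Vi : ∀ i, Subgroup (P i) := fun i => V.comap (MonoidHom.mulSingle P i) with hVi
  haveI hVin : ∀ i, (Vi i).Normal := fun i => Subgroup.Normal.comap hVn _
  have hViopen : ∀ i, IsOpen ((Vi i : Set (P i))) := fun i => by
    have : ((Vi i : Set (P i))) = (Pi.mulSingle i : P i → ∀ j, P j) ⁻¹' (V : Set (∀ i, P i)) := rfl
    rw [this]
    exact hVopen.preimage (continuous_mulSingle i)
  haveI : ∀ i, Finite (P i ⧸ Vi i) := fun i => Subgroup.quotient_finite_of_isOpen _ (hViopen i)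
  haveI : ∀ i, Fact (p i).Prime := fun i => ⟨hp i⟩
  have hcard : ∀ i, ∃ m, Nat.card (P i ⧸ Vi i) = p i ^ m := fun i =>
    hpro i (Vi i) (hVin i) (hViopen i)
  have hPG : ∀ i, IsPGroup (p i) (P i ⧸ Vi i) := fun i => by
    obtain ⟨m, hm⟩ := hcard i; exact IsPGroup.of_card hm
  haveI : ∀ i, Group.IsNilpotent (P i ⧸ Vi i) := fun i => (hPG i).isNilpotent
  set φ : ∀ i, (P i ⧸ Vi i) →* ((∀ i, P i) ⧸ V) :=
    fun i => QuotientGroup.map (Vi i) V (MonoidHom.mulSingle P i) le_rfl with hφ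
  have hcomm : Pairwise fun i j => ∀ x y, Commute (φ i x) (φ j y) := by
    intro i j hij x y
    refine QuotientGroup.induction_on x fun a => QuotientGroup.induction_on y fun b => ?_
    have e1 : φ i ((a : P i ⧸ Vi i)) = QuotientGroup.mk' V (Pi.mulSingle i a) :=
      QuotientGroup.map_mk (Vi i) V _ le_rfl a
    have e2 : φ j ((b : P j ⧸ Vi j)) = QuotientGroup.mk' V (Pi.mulSingle j b) :=
      QuotientGroup.map_mk (Vi j) V _ le_rfl b
    rw [e1, e2]
    exact (Pi.mulSingle_commute hij a b).map (QuotientGroup.mk' V)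
  set ψ := MonoidHom.noncommPiCoprod φ hcomm with hψ
  have hsurj : Function.Surjective ψ := by
    intro z
    refine QuotientGroup.induction_on z fun x => ?_
    refine ⟨fun i => ((x i : P i ⧸ Vi i)), ?_⟩
    rw [MonoidHom.noncommPiCoprod_apply]
    have e : ∀ i ∈ Finset.univ, φ i ((x i : P i ⧸ Vi i))
        = QuotientGroup.mk' V (Pi.mulSingle i (x i)) :=
      fun i _ => QuotientGroup.map_mk (Vi i) V _ le_rfl (x i)
    rw [Finset.noncommProd_congr rfl e, ← Finset.map_noncommProd,
      Finset.noncommProd_mulSingle]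
    rfl
    exact fun i _ j _ hij => Pi.mulSingle_commute hij (x i) (x j)
  refine ⟨nilpotent_of_surjective ψ hsurj, ?_⟩
  intro r hr hdvd
  have h1 : Nat.card ((∀ i, P i) ⧸ V) ∣ Nat.card (∀ i, P i ⧸ Vi i) :=
    Subgroup.card_dvd_of_surjective ψ hsurj
  rw [Nat.card_pi] at h1
  obtain ⟨i, -, hi⟩ := hr.prime.exists_mem_finset_dvd (hdvd.trans h1)
  obtain ⟨m, hm⟩ := hcard i
  rw [hm] at hi
  exact ⟨i, (Nat.prime_dvd_prime_iff_eq hr (hp i)).mp (hr.dvd_of_dvd_pow hi)⟩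


lemma coatom_contains {n : ℕ} (p : Fin n → ℕ) (hp : ∀ i, (p i).Prime)
    (P : Fin n → Type*) [∀ i, Group (P i)] [∀ i, TopologicalSpace (P i)]
    [∀ i, IsTopologicalGroup (P i)] [∀ i, CompactSpace (P i)]
    (hpro : ∀ i, ∀ U : Subgroup (P i), U.Normal → IsOpen (U : Set (P i)) →
      ∃ m : ℕ, Nat.card (P i ⧸ U) = p i ^ m)
    (M : Subgroup (∀ i, P i)) (hMopen : IsOpen (M : Set (∀ i, P i))) (hMco : IsCoatom M) :
    (∀ x y : ∀ i, P i, ⁅x, y⁆ ∈ M) ∧ ∀ x : ∀ i, P i, x ^ (∏ i, p i) ∈ M := by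
  classical
  have hMclopen : IsClopen (M : Set (∀ i, P i)) :=
    ⟨M.isClosed_of_isOpen hMopen, hMopen⟩
  obtain ⟨V, hVsub⟩ :=
    IsTopologicalGroup.exist_openNormalSubgroup_sub_clopen_nhds_of_one hMclopen M.one_mem
  have hVle : V.toSubgroup ≤ M := hVsub
  obtain ⟨hnil, hprimes⟩ := quot_aux p hp P hpro V.toSubgroup V.isOpen
  haveI := hnil
  set f := QuotientGroup.mk' V.toSubgroup with hf
  have hfs : Function.Surjective f := QuotientGroup.mk'_surjective _
  set M' := Subgroup.map f M with hM'
  have hcm : Subgroup.comap f M' = M := by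
    rw [hM', Subgroup.comap_map_eq, hf, QuotientGroup.ker_mk', sup_eq_left.mpr hVle]
  have hM'co : IsCoatom M' := by
    constructor
    · intro h
      apply hMco.1
      rw [← hcm, h, Subgroup.comap_top]
    · intro L' hlt
      have hlt2 : M < Subgroup.comap f L' := by
        rw [← hcm]
        exact lt_of_le_of_ne (Subgroup.comap_mono hlt.le)
          (fun h => hlt.ne (Subgroup.comap_injective hfs h))
      have htop := hMco.2 _ hlt2
      rw [← Subgroup.map_comap_eq_self_of_surjective hfs L', htop,
        Subgroup.map_top_of_surjective f hfs]
  haveI hM'n : M'.Normal :=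
    Subgroup.NormalizerCondition.normal_of_coatom M' normalizerCondition_of_isNilpotent hM'co
  haveI hMn : M.Normal := hcm ▸ Subgroup.Normal.comap hM'n f
  haveI : Finite ((∀ i, P i) ⧸ M) := Subgroup.quotient_finite_of_isOpen _ hMopen
  set π := QuotientGroup.mk' M with hπ
  have hπs : Function.Surjective π := QuotientGroup.mk'_surjective _
  have hsub : ∀ Z : Subgroup ((∀ i, P i) ⧸ M), Z = ⊥ ∨ Z = ⊤ := by
    intro Z
    have hMle : M ≤ Subgroup.comap π Z := by
      intro x hx
      refine Subgroup.mem_comap.mpr ?_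
      have : π x = 1 := (QuotientGroup.eq_one_iff x).mpr hx
      rw [this]; exact Z.one_mem
    rcases eq_or_lt_of_le hMle with he | hlt
    · left
      rw [← Subgroup.map_comap_eq_self_of_surjective hπs Z, ← he]
      exact (Subgroup.map_eq_bot_iff M).mpr (by rw [hπ, QuotientGroup.ker_mk'])
    · right
      have := hMco.2 _ hlt
      rw [← Subgroup.map_comap_eq_self_of_surjective hπs Z, this,
        Subgroup.map_top_of_surjective π hπs]
  set q := Nat.card ((∀ i, P i) ⧸ M) with hq
  have hQnontriv : Nontrivial ((∀ i, P i) ⧸ M) := by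
    obtain ⟨x, hx⟩ : ∃ x, x ∉ M := by
      by_contra h; push_neg at h; exact hMco.1 ((Subgroup.eq_top_iff' M).mpr h)
    exact ⟨⟨QuotientGroup.mk x, 1, by
      simp only [ne_eq, QuotientGroup.eq_one_iff]; exact hx⟩⟩
  have hq1 : q ≠ 1 := (Finite.one_lt_card.ne')
  haveI : Fact (q.minFac).Prime := ⟨Nat.minFac_prime hq1⟩
  obtain ⟨g, hg⟩ := exists_prime_orderOf_dvd_card' q.minFac (Nat.minFac_dvd q)
  have hgne : g ≠ 1 := by
    intro h
    rw [h, orderOf_one] at hg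
    exact (Nat.minFac_prime hq1).one_lt.ne' hg.symm
  have hzp : Subgroup.zpowers g = ⊤ := by
    rcases hsub (Subgroup.zpowers g) with h | h
    · exact absurd (h ▸ Subgroup.mem_zpowers g) (by simp [hgne])
    · exact h
  have hqm : q = q.minFac := by
    rw [← hg, ← Nat.card_zpowers, hzp]
    exact (Nat.card_congr Subgroup.topEquiv.toEquiv.symm)
  have hqprime : q.Prime := hqm ▸ Nat.minFac_prime hq1
  have hdvdV : q ∣ Nat.card ((∀ i, P i) ⧸ V.toSubgroup) :=
    Subgroup.index_dvd_of_le hVle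
  obtain ⟨i, hi⟩ := hprimes q hqprime hdvdV
  have hqc : q ∣ ∏ j, p j := hi ▸ Finset.dvd_prod_of_mem p (Finset.mem_univ i)
  have hcomm : ∀ a b : (∀ i, P i) ⧸ M, a * b = b * a := by
    intro a b
    have ha : a ∈ Subgroup.zpowers g := hzp.symm ▸ Subgroup.mem_top a
    have hb : b ∈ Subgroup.zpowers g := hzp.symm ▸ Subgroup.mem_top b
    obtain ⟨ka, rfl⟩ := ha
    obtain ⟨kb, rfl⟩ := hb
    exact ((Commute.refl g).zpow_zpow ka kb).eq
  refine ⟨?_, ?_⟩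
  · intro x y
    rw [← QuotientGroup.eq_one_iff]
    show π ⁅x, y⁆ = 1
    rw [map_commutatorElement]
    exact commutatorElement_eq_one_iff_commute.mpr (hcomm _ _)
  · intro x
    rw [← QuotientGroup.eq_one_iff]
    show π (x ^ (∏ j, p j)) = 1
    rw [map_pow]
    exact orderOf_dvd_iff_pow_eq_one.mp ((orderOf_dvd_natCard (π x)).trans hqc)


lemma finite_quot_of_dense_fg {G : Type*} [Group G] [TopologicalSpace G] [IsTopologicalGroup G]
    (c : ℕ) (hc : 0 < c) (T : Set G) (hT : T.Finite)
    (hTgen : (Subgroup.closure T).topologicalClosure = ⊤) :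
    Finite (G ⧸ (Subgroup.closure
      {z : G | (∃ x y : G, z = ⁅x, y⁆) ∨ ∃ x : G, z = x ^ c}).topologicalClosure) := by
  classical
  set K₀ := Subgroup.closure {z : G | (∃ x y : G, z = ⁅x, y⁆) ∨ ∃ x : G, z = x ^ c} with hK₀
  haveI hK₀n : K₀.Normal := by
    constructor
    intro k hk g
    have h1 : ⁅g, k⁆ ∈ K₀ := Subgroup.subset_closure (Or.inl ⟨g, k, rfl⟩)
    have h2 := mul_mem h1 hk
    have e : ⁅g, k⁆ * k = g * k * g⁻¹ := by
      rw [commutatorElement_def]; group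
    rwa [e] at h2
  set K := K₀.topologicalClosure with hKdef
  haveI : K.Normal := Subgroup.is_normal_topologicalClosure K₀
  haveI hKc : IsClosed (K : Set G) := Subgroup.isClosed_topologicalClosure K₀
  haveI : T3Space (G ⧸ K) := QuotientGroup.instT3Space K
  have hcom : ∀ a b : G ⧸ K, a * b = b * a := by
    intro a b
    refine QuotientGroup.induction_on a fun x => QuotientGroup.induction_on b fun y => ?_
    show ((x : G ⧸ K) * y) = (y : G ⧸ K) * x
    rw [← QuotientGroup.mk_mul, ← QuotientGroup.mk_mul, QuotientGroup.eq]
    have e : (x * y)⁻¹ * (y * x) = ⁅y⁻¹, x⁻¹⁆ := by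
      rw [commutatorElement_def]; group
    rw [e]
    exact K₀.le_topologicalClosure (Subgroup.subset_closure (Or.inl ⟨y⁻¹, x⁻¹, rfl⟩))
  have htor : ∀ a : G ⧸ K, a ^ c = 1 := by
    intro a
    refine QuotientGroup.induction_on a fun x => ?_
    show ((x : G ⧸ K)) ^ c = 1
    rw [← QuotientGroup.mk_pow, QuotientGroup.eq_one_iff]
    exact K₀.le_topologicalClosure (Subgroup.subset_closure (Or.inr ⟨x, rfl⟩))
  set Hq := Subgroup.closure ((QuotientGroup.mk : G → G ⧸ K) '' T) with hHq
  haveI : Finite ((QuotientGroup.mk : G → G ⧸ K) '' T) := (hT.image _).to_subtype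
  haveI hFGH : Group.FG Hq := Group.closure_finite_fg _
  letI : CommGroup Hq :=
    { (inferInstance : Group Hq) with
      mul_comm := fun a b => Subtype.ext (hcom (a : G ⧸ K) (b : G ⧸ K)) }
  have htorH : Monoid.IsTorsion Hq := fun a =>
    isOfFinOrder_iff_pow_eq_one.mpr ⟨c, hc, Subtype.ext (by
      push_cast
      exact htor (a : G ⧸ K))⟩
  haveI hHfin : Finite Hq := CommGroup.finite_of_fg_torsion _ htorH
  have hclosed : IsClosed (Hq : Set (G ⧸ K)) := (Set.toFinite _).isClosed
  have hdense : Dense (Hq : Set (G ⧸ K)) := by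
    have h1 : (QuotientGroup.mk : G → G ⧸ K) '' ↑(Subgroup.closure T) ⊆ (Hq : Set (G ⧸ K)) := by
      have e : Subgroup.map (QuotientGroup.mk' K) (Subgroup.closure T) = Hq := by
        rw [MonoidHom.map_closure]; rfl
      rw [← e, Subgroup.coe_map]
      exact le_rfl
    intro z
    refine QuotientGroup.induction_on z fun x => ?_
    have hx : x ∈ _root_.closure (↑(Subgroup.closure T) : Set G) := by
      rw [← Subgroup.topologicalClosure_coe, hTgen]; trivial
    have h2 : ((x : G ⧸ K)) ∈
        _root_.closure ((QuotientGroup.mk : G → G ⧸ K) '' ↑(Subgroup.closure T)) :=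
      image_closure_subset_closure_image continuous_quotient_mk' (Set.mem_image_of_mem _ hx)
    exact closure_mono h1 h2
  have huniv : (Hq : Set (G ⧸ K)) = Set.univ := by
    rw [← hclosed.closure_eq, hdense.closure_eq]
  have : Finite (G ⧸ K) := by
    rw [← Set.finite_univ_iff, ← huniv]
    exact Set.toFinite _
  exact this

lemma key_lemma {n : ℕ} (p : Fin n → ℕ) (hp : ∀ i, (p i).Prime)
    (P : Fin n → Type*) [∀ i, Group (P i)] [∀ i, TopologicalSpace (P i)]
    [∀ i, IsTopologicalGroup (P i)] [∀ i, CompactSpace (P i)] [∀ i, T2Space (P i)]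
    [∀ i, TotallyDisconnectedSpace (P i)]
    (hpro : ∀ i, ∀ U : Subgroup (P i), U.Normal → IsOpen (U : Set (P i)) →
      ∃ m : ℕ, Nat.card (P i ⧸ U) = p i ^ m)
    (hfg : ∀ i, ∃ S : Finset (P i),
      (Subgroup.closure (S : Set (P i))).topologicalClosure = ⊤) :
    ∃ Φ : Subgroup (∀ i, P i), IsOpen (Φ : Set (∀ i, P i)) ∧
      ∀ H : Subgroup (∀ i, P i), IsClosed (H : Set (∀ i, P i)) →
        (∀ x : ∀ i, P i, ∃ h ∈ H, h⁻¹ * x ∈ Φ) → H = ⊤ := by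
  classical
  set c := ∏ i, p i with hcdef
  have hc : 0 < c := Finset.prod_pos fun i _ => (hp i).pos
  choose S hS using hfg
  set T : Finset (∀ i, P i) := Finset.univ.biUnion
    (fun i => (S i).image (Pi.mulSingle i)) with hT
  have hTgen : (Subgroup.closure (T : Set (∀ i, P i))).topologicalClosure = ⊤ := by
    rw [eq_top_iff]
    intro x _
    set C := (Subgroup.closure (T : Set (∀ i, P i))).topologicalClosure with hC
    have hsingle : ∀ i (y : P i), Pi.mulSingle i y ∈ C := by
      intro i y
      have hmap : Subgroup.map (MonoidHom.mulSingle P i) (Subgroup.closure ↑(S i)) ≤ C := by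
        rw [MonoidHom.map_closure]
        refine le_trans (Subgroup.closure_mono ?_) (Subgroup.le_topologicalClosure _)
        intro z hz
        obtain ⟨w, hw, rfl⟩ := hz
        simp only [hT, Finset.coe_biUnion, Finset.coe_univ, Set.mem_iUnion, Finset.coe_image]
        exact ⟨i, trivial, Set.mem_image_of_mem _ hw⟩
      have h1 : (Pi.mulSingle i : P i → ∀ j, P j) '' ↑(Subgroup.closure (↑(S i) : Set (P i)))
          ⊆ (C : Set (∀ j, P j)) := by
        intro z hz
        obtain ⟨w, hw, rfl⟩ := hz
        exact hmap (Subgroup.mem_map_of_mem _ hw)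
      have h2 : y ∈ _root_.closure (↑(Subgroup.closure (↑(S i) : Set (P i))) : Set (P i)) := by
        rw [← Subgroup.topologicalClosure_coe, hS i]; trivial
      have h3 : Pi.mulSingle i y ∈
          _root_.closure ((Pi.mulSingle i : P i → ∀ j, P j) ''
            ↑(Subgroup.closure (↑(S i) : Set (P i)))) :=
        image_closure_subset_closure_image (continuous_mulSingle i)
          (Set.mem_image_of_mem _ h2)
      have h4 := closure_mono h1 h3
      rwa [IsClosed.closure_eq (Subgroup.isClosed_topologicalClosure _)] at h4
    have e := Finset.noncommProd_mulSingle x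
    rw [← e]
    exact Subgroup.noncommProd_mem C _ (fun i _ => hsingle i (x i))
  set genS : Set (∀ i, P i) :=
    {z | (∃ x y : ∀ i, P i, z = ⁅x, y⁆) ∨ ∃ x : ∀ i, P i, z = x ^ c} with hgenS
  set K := (Subgroup.closure genS).topologicalClosure with hKdef
  haveI hfinQ : Finite ((∀ i, P i) ⧸ K) :=
    finite_quot_of_dense_fg c hc (T : Set (∀ i, P i)) T.finite_toSet hTgen
  have hKclosed : IsClosed (K : Set (∀ i, P i)) := Subgroup.isClosed_topologicalClosure _
  haveI : K.FiniteIndex := Subgroup.finiteIndex_of_finite_quotient (H := K)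
  have hKopen : IsOpen (K : Set (∀ i, P i)) :=
    Subgroup.isOpen_of_isClosed_of_finiteIndex K hKclosed
  refine ⟨K, hKopen, ?_⟩
  intro H hHclosed hHK
  by_contra hne
  obtain ⟨M, hMopen, hMco, hHM⟩ := exists_open_coatom H hHclosed hne
  obtain ⟨hMcomm, hMpow⟩ := coatom_contains p hp P hpro M hMopen hMco
  have hKM : K ≤ M := by
    apply Subgroup.topologicalClosure_minimal
    · rw [Subgroup.closure_le]
      rintro z (⟨x, y, rfl⟩ | ⟨x, rfl⟩)
      · exact hMcomm x y
      · exact hMpow x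
    · exact M.isClosed_of_isOpen hMopen
  apply hMco.1
  rw [eq_top_iff]
  intro x _
  obtain ⟨h, hh, hhx⟩ := hHK x
  have e : x = h * (h⁻¹ * x) := by group
  rw [e]
  exact mul_mem (hHM hh) (hKM hhx)

/-- Let `P₁, …, P_n` be topologically finitely generated pro-`pᵢ`
groups (compact totally disconnected groups all of whose open normal subgroups have
`pᵢ`-power index).  Then the direct product `P = P₁ × ⋯ × P_n` is an isolated point of
its Chabauty space of closed subgroups. -/
theorem product_of_fg_pro_p_self_chabauty_isolated
    (n : ℕ) (p : Fin n → ℕ) (hp : ∀ i, (p i).Prime)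
    (P : Fin n → Type*) [∀ i, Group (P i)] [∀ i, TopologicalSpace (P i)]
    [∀ i, IsTopologicalGroup (P i)] [∀ i, CompactSpace (P i)] [∀ i, T2Space (P i)]
    [∀ i, TotallyDisconnectedSpace (P i)]
    (hpro : ∀ i, ∀ U : Subgroup (P i), U.Normal → IsOpen (U : Set (P i)) →
      ∃ m : ℕ, Nat.card (P i ⧸ U) = p i ^ m)
    (hfg : ∀ i, ∃ S : Finset (P i),
      (Subgroup.closure (S : Set (P i))).topologicalClosure = ⊤) :
    IsOpen ({fullSub (∀ i, P i)} : Set (ChabautySub (∀ i, P i))) := by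
  classical
  obtain ⟨Φ, hΦopen, hΦ⟩ := key_lemma p hp P hpro hfg
  set U : (∀ i, P i) → Set (∀ i, P i) := fun g => (fun x => g⁻¹ * x) ⁻¹' (Φ : Set (∀ i, P i))
    with hU
  have hUopen : ∀ g, IsOpen (U g) :=
    fun g => hΦopen.preimage (continuous_const.mul continuous_id)
  have hself : ∀ g, g ∈ U g := fun g => by
    show g⁻¹ * g ∈ Φ
    rw [inv_mul_cancel]
    exact Φ.one_mem
  obtain ⟨t, ht⟩ := isCompact_univ.elim_finite_subcover U hUopen
    (fun x _ => Set.mem_iUnion.mpr ⟨x, hself x⟩)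
  set 𝒢 : Set (Set (Set (∀ i, P i))) :=
    ({S | ∃ K : Set (∀ i, P i), IsCompact K ∧ S = {F : Set (∀ i, P i) | F ∩ K = ∅}} ∪
     {S | ∃ Uo : Set (∀ i, P i), IsOpen Uo ∧ S = {F : Set (∀ i, P i) | (F ∩ Uo).Nonempty}})
    with h𝒢
  have hgen : ∀ s : Finset (∀ i, P i), TopologicalSpace.GenerateOpen 𝒢
      {F : Set (∀ i, P i) | ∀ g ∈ s, (F ∩ U g).Nonempty} := by
    intro s
    induction s using Finset.induction_on with
    | empty =>
      have e : {F : Set (∀ i, P i) | ∀ g ∈ (∅ : Finset (∀ i, P i)), (F ∩ U g).Nonempty}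
          = Set.univ := by simp
      rw [e]; exact TopologicalSpace.GenerateOpen.univ
    | @insert a s ha ih =>
      have e : {F : Set (∀ i, P i) | ∀ g ∈ insert a s, (F ∩ U g).Nonempty}
          = {F : Set (∀ i, P i) | (F ∩ U a).Nonempty}
            ∩ {F : Set (∀ i, P i) | ∀ g ∈ s, (F ∩ U g).Nonempty} := by
        ext F; simp [Finset.forall_mem_insert]
      rw [e]
      exact TopologicalSpace.GenerateOpen.inter _ _
        (TopologicalSpace.GenerateOpen.basic _ (Or.inr ⟨U a, hUopen a, rfl⟩)) ih
  have hopenV : IsOpen ((fun H : ChabautySub (∀ i, P i) => (H.1 : Set (∀ i, P i))) ⁻¹'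
      {F | ∀ g ∈ t, (F ∩ U g).Nonempty}) := by
    refine (@isOpen_induced_iff _ _ (chabautySetTopology (∀ i, P i)) _ _).mpr
      ⟨{F | ∀ g ∈ t, (F ∩ U g).Nonempty}, ?_, rfl⟩
    exact hgen t
  have hset : ({fullSub (∀ i, P i)} : Set (ChabautySub (∀ i, P i)))
      = (fun H : ChabautySub (∀ i, P i) => (H.1 : Set (∀ i, P i))) ⁻¹'
        {F | ∀ g ∈ t, (F ∩ U g).Nonempty} := by
    ext H
    simp only [Set.mem_singleton_iff, Set.mem_preimage, Set.mem_setOf_eq]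
    constructor
    · rintro rfl g hgt
      exact ⟨g, by trivial, hself g⟩
    · intro hH
      have hHtop : H.1 = ⊤ := by
        apply hΦ H.1 H.2
        intro x
        have hx : x ∈ ⋃ g ∈ t, U g := ht (Set.mem_univ x)
        simp only [Set.mem_iUnion] at hx
        obtain ⟨g, hgt, hxg⟩ := hx
        obtain ⟨h, hh, hhU⟩ := hH g hgt
        refine ⟨h, hh, ?_⟩
        have h1 : g⁻¹ * h ∈ Φ := hhU
        have h2 : g⁻¹ * x ∈ Φ := hxg
        have e : h⁻¹ * x = (g⁻¹ * h)⁻¹ * (g⁻¹ * x) := by group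
        rw [e]
        exact mul_mem (inv_mem h1) h2
      exact Subtype.ext hHtop
  rw [hset]
  exact hopenV
end

section
/- Let G be a locally compact group that is an almost direct product G = C × D of a connected group C and a totally disconnected group D, such that: C is self-Chabauty-isolated, D is self-Chabauty-isolated, D contains a compact open subgroup K that is self-Chabauty-isolated in the strong sense that K has an open normal subgroup P so that the only closed subgroup of K meeting every coset of P is K itself, and the normal closure of K in D is D. Then G is self-Chabauty-isolated. -/
open TopologicalSpace Filter Set MeasureTheory

open Pointwise Topology

-- Extraction lemma
lemma extract_family (G : Type*) [Group G] [TopologicalSpace G]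
    (h : IsOpen ({fullSub G} : Set (ChabautySub G))) :
    ∃ 𝒰 : Set (Set G), 𝒰.Finite ∧ (∀ U ∈ 𝒰, IsOpen U ∧ U.Nonempty) ∧
      ∀ H : Subgroup G, IsClosed (H : Set G) →
        (∀ U ∈ 𝒰, ((H : Set G) ∩ U).Nonempty) → H = ⊤ := by
  classical
  set c : ChabautySub G → Set G := fun H => (H.1 : Set G) with hc
  set gens : Set (Set (Set G)) :=
    ({S | ∃ K : Set G, IsCompact K ∧ S = {F : Set G | F ∩ K = ∅}} ∪
     {S | ∃ U : Set G, IsOpen U ∧ S = {F : Set G | (F ∩ U).Nonempty}}) with hgens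
  have hbasis := isTopologicalBasis_of_subbasis
    (t := (inferInstance : TopologicalSpace (ChabautySub G)))
    (s := (preimage c) '' gens) (by rw [← induced_generateFrom_eq]; rfl)
  obtain ⟨v, ⟨S, ⟨hSfin, hSsub⟩, rfl⟩, hmem, hvsub⟩ :=
    hbasis.exists_subset_of_mem_open (mem_singleton (fullSub G)) h
  have key : ∀ s ∈ S, ∃ U : Set G, IsOpen U ∧ U.Nonempty ∧
      ∀ H : ChabautySub G, ((H.1 : Set G) ∩ U).Nonempty → H ∈ s := by
    intro s hs
    have hfull : fullSub G ∈ s := hmem s hs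
    obtain ⟨g, hg, rfl⟩ := hSsub hs
    rcases hg with ⟨Kc, _, rfl⟩ | ⟨U, hU, rfl⟩
    · refine ⟨univ, isOpen_univ, ⟨1, trivial⟩, fun H _ => ?_⟩
      have h1 : (univ : Set G) ∩ Kc = ∅ := by
        have := hfull
        exact this
      have h2 : Kc = ∅ := by rwa [univ_inter] at h1
      show ((H.1 : Set G)) ∩ Kc = ∅
      rw [h2, inter_empty]
    · refine ⟨U, hU, ?_, fun H hH => hH⟩
      have := hfull
      have h1 : ((univ : Set G) ∩ U).Nonempty := by
        exact this
      rwa [univ_inter] at h1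
  choose F hF using key
  refine ⟨{U | ∃ s, ∃ hs : s ∈ S, F s hs = U}, hSfin.dependent_image F, ?_, ?_⟩
  · rintro U ⟨s, hs, rfl⟩
    exact ⟨(hF s hs).1, (hF s hs).2.1⟩
  · intro H hHcl hall
    have hH : (⟨H, hHcl⟩ : ChabautySub G) ∈ ⋂₀ S := by
      intro s hs
      exact (hF s hs).2.2 _ (hall _ ⟨s, hs, rfl⟩)
    have := hvsub hH
    have h2 : (⟨H, hHcl⟩ : ChabautySub G) = fullSub G := this
    exact congrArg Subtype.val h2

-- Sufficiency lemma
lemma isOpen_of_family (G : Type*) [Group G] [TopologicalSpace G]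
    (𝒲 : Set (Set G)) (hfin : 𝒲.Finite) (hop : ∀ W ∈ 𝒲, IsOpen W)
    (hne : ∀ W ∈ 𝒲, W.Nonempty)
    (hiso : ∀ H : Subgroup G, IsClosed (H : Set G) →
      (∀ W ∈ 𝒲, ((H : Set G) ∩ W).Nonempty) → H = ⊤) :
    IsOpen ({fullSub G} : Set (ChabautySub G)) := by
  have heq : ({fullSub G} : Set (ChabautySub G)) =
      ⋂ W ∈ 𝒲, {H : ChabautySub G | ((H.1 : Set G) ∩ W).Nonempty} := by
    ext H
    simp only [mem_singleton_iff, mem_iInter, mem_setOf_eq]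
    constructor
    · rintro rfl W hW
      have : ((fullSub G).1 : Set G) = univ := by simp [fullSub]
      rw [this, univ_inter]; exact hne W hW
    · intro hall
      have h1 : H.1 = ⊤ := hiso H.1 H.2 hall
      exact Subtype.ext h1
  rw [heq]
  refine hfin.isOpen_biInter fun W hW => ?_
  have hgen : IsOpen[chabautySetTopology G] {F : Set G | (F ∩ W).Nonempty} :=
    TopologicalSpace.GenerateOpen.basic _ (Or.inr ⟨W, hop W hW, rfl⟩)
  exact ⟨{F : Set G | (F ∩ W).Nonempty}, hgen, rfl⟩

-- Closed projection
lemma closed_proj {C D : Type*} [TopologicalSpace C] [TopologicalSpace D]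
    {S : Set (C × D)} {Q : Set D} (hS : IsClosed S) (hQ : IsCompact Q)
    (hsub : ∀ x ∈ S, x.2 ∈ Q) : IsClosed (Prod.fst '' S) := by
  haveI : CompactSpace Q := isCompact_iff_compactSpace.mp hQ
  set e : C × Q → C × D := fun p => (p.1, (p.2 : D)) with he
  have hecont : Continuous e := continuous_fst.prodMk (continuous_subtype_val.comp continuous_snd)
  have h1 : Prod.fst '' S = (Prod.fst : C × Q → C) '' (e ⁻¹' S) := by
    ext x; constructor
    · rintro ⟨⟨a, b⟩, hab, rfl⟩
      exact ⟨(a, ⟨b, hsub _ hab⟩), hab, rfl⟩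
    · rintro ⟨⟨a, b⟩, hab, rfl⟩
      exact ⟨(a, (b : D)), hab, rfl⟩
  rw [h1]
  exact isClosedMap_fst_of_compactSpace _ (hS.preimage hecont)

/-- Let `G = C × D` be a product of a connected locally compact group
`C` and a totally disconnected locally compact group `D` such that: `C` and `D` are
self-Chabauty-isolated; `D` has a compact open subgroup `K` which is self-Chabauty-isolated
in the strong sense that `K` has an open normal subgroup `P` such that the only closed
subgroup of `K` meeting every coset of `P` is `K` itself; and the normal closure of `K` in
`D` is `D`.  Then `G` is self-Chabauty-isolated. -/
theorem product_self_chabauty_isolated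
    (C : Type*) [Group C] [TopologicalSpace C] [IsTopologicalGroup C]
    [LocallyCompactSpace C] [SecondCountableTopology C] [ConnectedSpace C]
    (D : Type*) [Group D] [TopologicalSpace D] [IsTopologicalGroup D]
    [LocallyCompactSpace D] [SecondCountableTopology D] [TotallyDisconnectedSpace D]
    (hC : IsOpen ({fullSub C} : Set (ChabautySub C)))
    (hD : IsOpen ({fullSub D} : Set (ChabautySub D)))
    (K : Subgroup D) (hKcpt : IsCompact (K : Set D)) (hKopen : IsOpen (K : Set D))
    (P : Subgroup D) (hPK : P ≤ K) (hPopen : IsOpen (P : Set D))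
    (hPnormal : ∀ x ∈ K, ∀ y ∈ P, x * y * x⁻¹ ∈ P)
    (hKiso : ∀ L : Subgroup D, IsClosed (L : Set D) → L ≤ K →
      (∀ x ∈ K, ∃ y ∈ L, x⁻¹ * y ∈ P) → L = K)
    (hKnc : Subgroup.normalClosure (K : Set D) = ⊤) :
    IsOpen ({fullSub (C × D)} : Set (ChabautySub (C × D))) := by
  classical
  obtain ⟨𝒰, h𝒰fin, h𝒰prop, h𝒰iso⟩ := extract_family C hC
  obtain ⟨𝒱, h𝒱fin, h𝒱prop, h𝒱iso⟩ := extract_family D hD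
  have hPclosed : IsClosed (P : Set D) := P.isClosed_of_isOpen hPopen
  have hKclosed : IsClosed (K : Set D) := K.isClosed_of_isOpen hKopen
  have hPcpt : IsCompact (P : Set D) := hKcpt.of_isClosed_subset hPclosed hPK
  -- finitely many cosets of P cover K
  have hcover : (K : Set D) ⊆ ⋃ k ∈ (K : Set D), k • (P : Set D) := by
    intro x hx
    refine mem_biUnion hx ?_
    exact ⟨1, P.one_mem, by simp⟩
  obtain ⟨R, hRsub, hRfin, hRcover⟩ := hKcpt.elim_finite_subcover_image
    (fun k _ => hPopen.smul k) hcover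
  -- the family of opens for C × D
  set 𝒲 : Set (Set (C × D)) :=
    ((fun U => U ×ˢ (P : Set D)) '' 𝒰) ∪
    ((fun V => (univ : Set C) ×ˢ V) '' 𝒱) ∪
    ((fun k => (univ : Set C) ×ˢ (k • (P : Set D))) '' R) with h𝒲def
  apply isOpen_of_family _ 𝒲
  · exact ((h𝒰fin.image _).union (h𝒱fin.image _)).union (hRfin.image _)
  · rintro W ((⟨U, hU, rfl⟩ | ⟨V, hV, rfl⟩) | ⟨k, hk, rfl⟩)
    · exact (h𝒰prop U hU).1.prod hPopen
    · exact isOpen_univ.prod (h𝒱prop V hV).1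
    · exact isOpen_univ.prod (hPopen.smul k)
  · rintro W ((⟨U, hU, rfl⟩ | ⟨V, hV, rfl⟩) | ⟨k, hk, rfl⟩)
    · exact (h𝒰prop U hU).2.prod ⟨1, P.one_mem⟩
    · exact ⟨(1, (h𝒱prop V hV).2.choose), trivial, (h𝒱prop V hV).2.choose_spec⟩
    · exact ⟨(1, k • (1 : D)), trivial, Set.smul_mem_smul_set P.one_mem⟩
  -- the main argument
  intro H hHcl hall
  have hallU : ∀ U ∈ 𝒰, ((H : Set (C × D)) ∩ U ×ˢ (P : Set D)).Nonempty :=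
    fun U hU => hall _ (Or.inl (Or.inl ⟨U, hU, rfl⟩))
  have hallV : ∀ V ∈ 𝒱, ((H : Set (C × D)) ∩ (univ : Set C) ×ˢ V).Nonempty :=
    fun V hV => hall _ (Or.inl (Or.inr ⟨V, hV, rfl⟩))
  have hallR : ∀ k ∈ R, ((H : Set (C × D)) ∩ (univ : Set C) ×ˢ (k • (P : Set D))).Nonempty :=
    fun k hk => hall _ (Or.inr ⟨k, hk, rfl⟩)
  -- Step 1: the projection of H ∩ (C × P) to C is all of C
  set A : Subgroup C := (H ⊓ Subgroup.comap (MonoidHom.snd C D) P).map (MonoidHom.fst C D)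
    with hAdef
  have hAcoe : (A : Set C) = Prod.fst ''
      ((H : Set (C × D)) ∩ (Prod.snd ⁻¹' (P : Set D))) := by
    rw [hAdef, Subgroup.coe_map, Subgroup.coe_inf, Subgroup.coe_comap]
    rfl
  have hAclosed : IsClosed (A : Set C) := by
    rw [hAcoe]
    exact closed_proj (hHcl.inter (hPclosed.preimage continuous_snd)) hPcpt
      (fun x hx => hx.2)
  have hAtop : A = ⊤ := by
    refine h𝒰iso A hAclosed fun U hU => ?_
    obtain ⟨⟨a, b⟩, hab, haU, hbP⟩ := hallU U hU
    refine ⟨a, ?_, haU⟩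
    rw [hAcoe]
    exact ⟨(a, b), ⟨hab, hbP⟩, rfl⟩
  have hA : ∀ c : C, ∃ p ∈ P, ((c, p) : C × D) ∈ H := by
    intro c
    have : c ∈ A := hAtop ▸ Subgroup.mem_top c
    obtain ⟨x, hx, hx1⟩ := Subgroup.mem_map.mp this
    obtain ⟨hxH, hxP⟩ := Subgroup.mem_inf.mp hx
    exact ⟨x.2, hxP, by rwa [show ((c, x.2) : C × D) = x from Prod.ext hx1.symm rfl]⟩
  -- Step 2: the projection of H to D is dense
  have hdense : Dense ((H.map (MonoidHom.snd C D) : Subgroup D) : Set D) := by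
    have htop : (H.map (MonoidHom.snd C D)).topologicalClosure = ⊤ := by
      refine h𝒱iso _ (Subgroup.isClosed_topologicalClosure _) fun V hV => ?_
      obtain ⟨⟨a, b⟩, hab, _, hbV⟩ := hallV V hV
      exact ⟨b, Subgroup.le_topologicalClosure _ ⟨(a, b), hab, rfl⟩, hbV⟩
    rw [dense_iff_closure_eq, ← Subgroup.topologicalClosure_coe, htop, Subgroup.coe_top]
  -- Step 3: {1} × K ⊆ H
  set T : Subgroup D := Subgroup.comap (MonoidHom.inr C D) H with hTdef
  have hTclosed : IsClosed (T : Set D) := by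
    have : Continuous (MonoidHom.inr C D : D → C × D) :=
      continuous_const.prodMk continuous_id
    exact hHcl.preimage this
  have hKT : K ≤ T := by
    have hLK : T ⊓ K = K := by
      refine hKiso (T ⊓ K) ?_ inf_le_right ?_
      · rw [Subgroup.coe_inf]; exact hTclosed.inter hKclosed
      · intro x hx
        obtain ⟨k, hk, hxk⟩ := mem_iUnion₂.mp (hRcover hx)
        obtain ⟨p₀, hp₀, hp₀x⟩ := hxk
        obtain ⟨⟨a, b⟩, hab, _, hbkP⟩ := hallR k hk
        obtain ⟨p₁, hp₁, hp₁b⟩ := hbkP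
        obtain ⟨p, hp, hapH⟩ := hA a
        have hkK : k ∈ K := hRsub hk
        have h1y : ((1, p⁻¹ * b) : C × D) ∈ H := by
          have := H.mul_mem (H.inv_mem hapH) hab
          simpa using this
        refine ⟨p⁻¹ * b, ?_, ?_⟩
        · refine Subgroup.mem_inf.mpr ⟨h1y, ?_⟩
          have hb : k * p₁ = b := by simpa [smul_eq_mul] using hp₁b
          exact K.mul_mem (K.inv_mem (hPK hp)) (hb ▸ K.mul_mem hkK (hPK hp₁))
        · have hb : k * p₁ = b := by simpa [smul_eq_mul] using hp₁b
          have hx' : k * p₀ = x := by simpa [smul_eq_mul] using hp₀x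
          have hxinv : x⁻¹ * b ∈ P := by
            have : x⁻¹ * b = p₀⁻¹ * p₁ := by
              rw [← hb, ← hx']; group
            rw [this]; exact P.mul_mem (P.inv_mem hp₀) hp₁
          have hconj : x⁻¹ * p⁻¹ * x ∈ P := by
            have := hPnormal x⁻¹ (K.inv_mem hx) p⁻¹ (P.inv_mem hp)
            simpa using this
          have : x⁻¹ * (p⁻¹ * b) = (x⁻¹ * p⁻¹ * x) * (x⁻¹ * b) := by group
          rw [this]
          exact P.mul_mem hconj hxinv
    intro k hk
    exact (Subgroup.mem_inf.mp (hLK.ge hk)).1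
  -- Step 4: T = ⊤, i.e. {1} × D ⊆ H
  have hTtop : T = ⊤ := by
    have hW : ∀ d : D, ∀ k ∈ K, d * k * d⁻¹ ∈ T := by
      set W : Set D := ⋂ k ∈ (K : Set D), (fun d => d * k * d⁻¹) ⁻¹' (T : Set D) with hWdef
      have hWclosed : IsClosed W :=
        isClosed_biInter fun k _ => hTclosed.preimage (by fun_prop)
      have hWsub : ((H.map (MonoidHom.snd C D) : Subgroup D) : Set D) ⊆ W := by
        rintro d ⟨⟨a, b⟩, hab, rfl⟩
        refine mem_iInter₂.mpr fun k hk => ?_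
        have h1k : ((1, k) : C × D) ∈ H := hKT hk
        have := H.mul_mem (H.mul_mem hab h1k) (H.inv_mem hab)
        show ((1 : C), (a, b).2 * k * (a, b).2⁻¹) ∈ H
        simpa [mul_assoc] using this
      have hWuniv : W = univ := by
        have h1 : closure ((H.map (MonoidHom.snd C D) : Subgroup D) : Set D) ⊆ W :=
          hWclosed.closure_subset_iff.mpr hWsub
        rw [hdense.closure_eq] at h1
        exact eq_univ_of_univ_subset h1
      intro d k hk
      have : d ∈ W := hWuniv ▸ mem_univ d
      exact mem_iInter₂.mp this k hk
    have hsub : Group.conjugatesOfSet (K : Set D) ⊆ (T : Set D) := by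
      intro a ha
      obtain ⟨k, hk, hconj⟩ := Group.mem_conjugatesOfSet_iff.mp ha
      obtain ⟨g, hg⟩ := isConj_iff.mp hconj
      exact hg ▸ hW g k hk
    have : Subgroup.normalClosure (K : Set D) ≤ T :=
      (Subgroup.closure_le T).mpr
        (Set.Subset.trans (fun x hx => hx) hsub)
    rw [hKnc] at this
    exact top_le_iff.mp this
  have hD1 : ∀ d : D, ((1, d) : C × D) ∈ H := by
    intro d
    exact (hTtop ▸ Subgroup.mem_top d : d ∈ T)
  -- Step 5: C × {1} ⊆ H and conclude
  have hC1 : ∀ c : C, ((c, (1 : D)) : C × D) ∈ H := by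
    intro c
    obtain ⟨p, hp, hcp⟩ := hA c
    have := H.mul_mem hcp (hD1 p⁻¹)
    simpa using this
  rw [Subgroup.eq_top_iff']
  intro x
  have := H.mul_mem (hC1 x.1) (hD1 x.2)
  simpa using this
end
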